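/- arXiv:math/0602190 — 7 statements merged into one kernel-verified Lean document; each statement's English description precedes it below -/
import Mathlib

section
/- Suppose M : ℝ² → ℝ² → ℝ² is a commutative operation such that for every a ∈ ℝ², the maps x ↦ a + x and x ↦ a - x commute with M (i.e., f (M x y) = M (f x) (f y)). Then M x y = (x + y)/2 for all x, y. -/
/-! Translating by `x` reduces `M x y` to `M 0 (y - x)`. Writing `m d := M 0 d`, the reflection
`x ↦ -x` gives `m (-d) = -m d`, and translating the pair `(-d, 0)` by `d` together with commutativity
gives `d + m (-d) = m d`; hence `2 • m d = d`. -/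

section Midpoint

variable {K V : Type*} [Field K] [CharZero K] [AddCommGroup V] [Module K V]
  {M : V → V → V}

theorem map_zero_neg_of_commute_sub (hminus : ∀ a x y, a - M x y = M (a - x) (a - y)) (d : V) :
    M 0 (-d) = -M 0 d := by
  simpa using (hminus 0 0 d).symm

theorem map_zero_eq_inv_two_smul (hcomm : ∀ x y, M x y = M y x)
    (hplus : ∀ a x y, a + M x y = M (a + x) (a + y))
    (hminus : ∀ a x y, a - M x y = M (a - x) (a - y)) (d : V) :
    M 0 d = (2 : K)⁻¹ • d := by
  have hd : d - M 0 d = M 0 d := by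
    simpa [hcomm (-d), map_zero_neg_of_commute_sub hminus, sub_eq_add_neg] using hplus d (-d) 0
  have h2 : d = (2 : K) • M 0 d := by
    linear_combination (norm := module) hd
  exact ((inv_smul_eq_iff₀ two_ne_zero).mpr h2).symm

theorem eq_inv_two_smul_add_of_commute_add_sub (hcomm : ∀ x y, M x y = M y x)
    (hplus : ∀ a x y, a + M x y = M (a + x) (a + y))
    (hminus : ∀ a x y, a - M x y = M (a - x) (a - y)) (x y : V) :
    M x y = (2 : K)⁻¹ • (x + y) := by
  have htrans := hplus x 0 (y - x)
  rw [add_zero, add_sub_cancel] at htrans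
  rw [← htrans, map_zero_eq_inv_two_smul (K := K) hcomm hplus hminus]
  module

end Midpoint

theorem stmt_1 (M : ℝ × ℝ → ℝ × ℝ → ℝ × ℝ)
    (hcomm : ∀ x y, M x y = M y x)
    (hplus : ∀ a x y, a + M x y = M (a + x) (a + y))
    (hminus : ∀ a x y, a - M x y = M (a - x) (a - y)) :
    ∀ x y, M x y = ((2 : ℝ)⁻¹) • (x + y) :=
  eq_inv_two_smul_add_of_commute_add_sub hcomm hplus hminus
end

section
/- Let V be a finite-dimensional real vector space and G a subgroup of GL(V) which is bounded (i.e., precompact in End(V)). Then there exists a G-invariant positive-definite quadratic form Q on V, i.e., Q(g v) = Q(v) for all g ∈ G, v ∈ V. -/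
open MeasureTheory Topology Bornology

theorem stmt_5 (V : Type*) [NormedAddCommGroup V] [NormedSpace ℝ V]
    [FiniteDimensional ℝ V] (G : Subgroup (V →L[ℝ] V)ˣ)
    (hG : Bornology.IsBounded ((fun g : (V →L[ℝ] V)ˣ => (g : V →L[ℝ] V)) '' (G : Set (V →L[ℝ] V)ˣ))) :
    ∃ Q : QuadraticForm ℝ V, (∀ v : V, v ≠ 0 → 0 < Q v) ∧
      ∀ g ∈ G, ∀ v : V, Q ((g : V →L[ℝ] V) v) = Q v := by
  classical
  set M := V →L[ℝ] V with hM
  -- the embedding of units into M × Mᵐᵒᵖ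
  set e : Mˣ → M × Mᵐᵒᵖ := ⇑(Units.embedProduct M) with he
  -- the closure of G is a compact subgroup
  set K : Subgroup Mˣ := G.topologicalClosure with hKdef
  set S : Set (M × Mᵐᵒᵖ) := closure (e '' (G : Set Mˣ)) with hSdef
  have hbound : Bornology.IsBounded (e '' (G : Set Mˣ)) := by
    have h2 : Bornology.IsBounded
        (MulOpposite.op '' ((fun g : Mˣ => (g : M)) '' (G : Set Mˣ))) := by
      obtain ⟨R, hR⟩ := hG.subset_closedBall (0 : M)
      apply (Metric.isBounded_closedBall (x := (MulOpposite.op (0:M))) (r := R)).subset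
      rintro _ ⟨x, hx, rfl⟩
      have := hR hx
      simp only [Metric.mem_closedBall] at this ⊢
      simpa [dist_eq_norm, MulOpposite.norm_op] using this
    have : e '' (G : Set Mˣ) ⊆
        ((fun g : Mˣ => (g : M)) '' (G : Set Mˣ)) ×ˢ
        (MulOpposite.op '' ((fun g : Mˣ => (g : M)) '' (G : Set Mˣ))) := by
      rintro _ ⟨x, hx, rfl⟩
      exact ⟨⟨x, hx, rfl⟩, ⟨(x⁻¹ : Mˣ), ⟨x⁻¹, G.inv_mem hx, rfl⟩, rfl⟩⟩
    exact (hG.prod h2).subset this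
  have hScompact : IsCompact S := by
    have : FiniteDimensional ℝ Mᵐᵒᵖ := (MulOpposite.opLinearEquiv ℝ).finiteDimensional
    exact Metric.isCompact_of_isClosed_isBounded isClosed_closure hbound.closure
  have hSrange : S ⊆ Set.range e := by
    intro x hx
    have h1 : ∀ y ∈ S, y.1 * y.2.unop = 1 ∧ y.2.unop * y.1 = 1 := by
      have hcl : IsClosed {y : M × Mᵐᵒᵖ | y.1 * y.2.unop = 1 ∧ y.2.unop * y.1 = 1} := by
        apply IsClosed.inter
        · exact isClosed_eq (continuous_fst.mul
            (MulOpposite.continuous_unop.comp continuous_snd)) continuous_const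
        · exact isClosed_eq ((MulOpposite.continuous_unop.comp continuous_snd).mul
            continuous_fst) continuous_const
      intro y hy
      refine closure_minimal ?_ hcl hy
      rintro _ ⟨z, hz, rfl⟩
      simp [e, Units.embedProduct]
    obtain ⟨ha, hb⟩ := h1 x hx
    exact ⟨⟨x.1, x.2.unop, ha, hb⟩, by
      simp [e, Units.embedProduct]⟩
  have hKcompact : IsCompact (K : Set Mˣ) := by
    have hcl : (K : Set Mˣ) = e ⁻¹' S := by
      rw [hKdef, Subgroup.topologicalClosure_coe, hSdef,
        (Units.isEmbedding_embedProduct (M := M)).closure_eq_preimage_closure_image]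
    rw [hcl]
    rw [(Units.isEmbedding_embedProduct (M := M)).isCompact_iff]
    rwa [Set.image_preimage_eq_of_subset hSrange]
  haveI : CompactSpace K := isCompact_iff_compactSpace.mp hKcompact
  letI : MeasurableSpace K := borel K
  haveI : BorelSpace K := ⟨rfl⟩
  -- Haar measure on K
  set K₀ : TopologicalSpace.PositiveCompacts K :=
    ⟨⟨Set.univ, isCompact_univ⟩, by simp⟩ with hK₀
  set μ : Measure K := Measure.haarMeasure K₀ with hμ
  -- the auxiliary inner product and integrand
  set te := toEuclidean (E := V) with hte
  set act : K → M := fun k => ((((k : Mˣ)⁻¹ : Mˣ)) : M) with hact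
  have hactcont : Continuous act :=
    Units.continuous_val.comp (continuous_inv.comp continuous_subtype_val)
  set F : V → V → K → ℝ := fun v w k => inner ℝ (te (act k v)) (te (act k w)) with hF
  have hcont : ∀ v w, Continuous (F v w) := by
    intro v w
    apply Continuous.inner
    · exact te.continuous.comp (hactcont.clm_apply continuous_const)
    · exact te.continuous.comp (hactcont.clm_apply continuous_const)
  have hint : ∀ v w, Integrable (F v w) μ := fun v w =>
    (hcont v w).integrable_of_hasCompactSupport (HasCompactSupport.of_compactSpace _)
  -- the invariant bilinear form
  set B : V →ₗ[ℝ] V →ₗ[ℝ] ℝ := LinearMap.mk₂ ℝ (fun v w => ∫ k, F v w k ∂μ)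
    (by intro m m' n
        have : ∀ k : K, F (m + m') n k = F m n k + F m' n k := by
          intro k; simp only [hF, map_add, inner_add_left]
        simp_rw [this]
        exact integral_add (hint m n) (hint m' n))
    (by intro c m n
        have : ∀ k : K, F (c • m) n k = c * F m n k := by
          intro k; simp only [hF, _root_.map_smul, real_inner_smul_left]
        simp_rw [this]
        exact integral_const_mul c _)
    (by intro m n n'
        have : ∀ k : K, F m (n + n') k = F m n k + F m n' k := by
          intro k; simp only [hF, map_add, inner_add_right]
        simp_rw [this]
        exact integral_add (hint m n) (hint m n'))
    (by intro c m n
        have : ∀ k : K, F m (c • n) k = c * F m n k := by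
          intro k; simp only [hF, _root_.map_smul, real_inner_smul_right]
        simp_rw [this]
        exact integral_const_mul c _) with hB
  refine ⟨(LinearMap.BilinMap.toQuadraticMap B), ?_, ?_⟩
  · intro v hv
    have hBv : (LinearMap.BilinMap.toQuadraticMap B) v = ∫ k, F v v k ∂μ := rfl
    rw [hBv]
    -- pointwise positivity
    have hpos : ∀ k : K, 0 < F v v k := by
      intro k
      have hne : act k v ≠ 0 := by
        have hkk : ((k : Mˣ) : M) (act k v) = v := by
          have h1 : ((k : Mˣ) : M) * act k = 1 := by
            rw [hact]
            rw [← Units.val_mul, mul_inv_cancel, Units.val_one]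
          have := congrArg (fun A : M => A v) h1
          simpa [ContinuousLinearMap.mul_apply] using this
        intro h
        apply hv
        rw [← hkk, h, map_zero]
      have : te (act k v) ≠ 0 := fun h => hne (by
        have := congrArg te.symm h
        simpa using this)
      calc (0:ℝ) < ‖te (act k v)‖ ^ 2 := pow_pos (norm_pos_iff.mpr this) 2
        _ = F v v k := (real_inner_self_eq_norm_sq _).symm
    obtain ⟨k₀, -, hk₀⟩ := CompactSpace.isCompact_univ.exists_isMinOn
      ⟨(1 : K), trivial⟩ (hcont v v).continuousOn
    have hμuniv : 0 < (μ Set.univ).toReal := by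
      refine ENNReal.toReal_pos ?_ (measure_ne_top μ _)
      exact (isOpen_univ.measure_pos μ Set.univ_nonempty).ne'
    calc (0:ℝ) < (μ Set.univ).toReal • F v v k₀ := by
          exact smul_pos hμuniv (hpos k₀)
      _ = ∫ _k, F v v k₀ ∂μ := by rw [integral_const]; rfl
      _ ≤ ∫ k, F v v k ∂μ := by
          exact integral_mono (integrable_const _) (hint v v) (fun k => hk₀ (Set.mem_univ k))
  · intro g hg v
    set gK : K := ⟨g, Subgroup.le_topologicalClosure G hg⟩ with hgK
    have key : ∀ k : K, F v v (gK⁻¹ * k) = F ((g : M) v) ((g : M) v) k := by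
      intro k
      have : act (gK⁻¹ * k) = act k * (g : M) := by
        simp only [hact, hgK]
        push_cast
        simp [mul_inv_rev]
      have h2 : (act k * (g : M)) v = (act k) ((g : M) v) := rfl
      simp only [hF, this, h2]
    have h1 : (LinearMap.BilinMap.toQuadraticMap B) ((g : M) v) = ∫ k, F ((g:M) v) ((g:M) v) k ∂μ := rfl
    have h2 : (LinearMap.BilinMap.toQuadraticMap B) v = ∫ k, F v v k ∂μ := rfl
    rw [h1, h2]
    calc ∫ k, F ((g:M) v) ((g:M) v) k ∂μ = ∫ k, F v v (gK⁻¹ * k) ∂μ := by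
          simp_rw [key]
      _ = ∫ k, F v v k ∂μ := integral_mul_left_eq_self (F v v) gK⁻¹
end

section
/- Let G be a bounded subgroup of GL(2, ℝ). If A ∈ G satisfies det(A) = 1 and A ≠ ±I, then writing A = (tr(A)/2)·I + J with J traceless, one has J² = −(1 − (tr(A)/2)²)·I with 1 − (tr(A)/2)² > 0; in particular |tr(A)| < 2. -/
/-- `G` is a bounded subset of the space of 2×2 real matrices. -/
def MatBounded (G : Subgroup (GL (Fin 2) ℝ)) : Prop :=
  ∃ C : ℝ, ∀ A ∈ G, ∀ i j : Fin 2, |(A : Matrix (Fin 2) (Fin 2) ℝ) i j| ≤ C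

private lemma ch2 (M : Matrix (Fin 2) (Fin 2) ℝ) :
    M * M = (Matrix.trace M) • M - (Matrix.det M) • 1 := by
  ext i j
  fin_cases i <;> fin_cases j <;>
    simp [Matrix.mul_apply, Fin.sum_univ_succ, Matrix.det_fin_two, Matrix.trace_fin_two,
      Matrix.one_apply] <;> ring

private def seqab (t : ℝ) : ℕ → ℝ × ℝ
  | 0 => (1, 0)
  | n+1 => (t * (seqab t n).1 + (t^2-1) * (seqab t n).2, (seqab t n).1 + t * (seqab t n).2)

private lemma key (G : Subgroup (GL (Fin 2) ℝ)) (hG : MatBounded G)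
    (B : GL (Fin 2) ℝ) (hB : B ∈ G)
    (hdet : Matrix.det (B : Matrix (Fin 2) (Fin 2) ℝ) = 1)
    (htr : 2 ≤ Matrix.trace (B : Matrix (Fin 2) (Fin 2) ℝ))
    (hne : (B : Matrix (Fin 2) (Fin 2) ℝ) ≠ 1) : False := by
  obtain ⟨C, hC⟩ := hG
  set M : Matrix (Fin 2) (Fin 2) ℝ := (B : Matrix (Fin 2) (Fin 2) ℝ) with hM
  set t : ℝ := Matrix.trace M / 2 with ht
  have ht1 : 1 ≤ t := by simp [ht]; linarith
  set K : Matrix (Fin 2) (Fin 2) ℝ := M - t • 1 with hK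
  have hMt : M = t • 1 + K := by simp [hK]
  have htrM : Matrix.trace M = 2 * t := by rw [ht]; ring
  have hK2 : K * K = (t^2 - 1) • (1 : Matrix (Fin 2) (Fin 2) ℝ) := by
    have := ch2 M
    rw [hK]
    simp only [sub_mul, mul_sub, Matrix.smul_mul, Matrix.mul_smul, mul_one, one_mul, this,
      hdet, htrM]
    ext i j
    simp [Matrix.one_apply, Matrix.smul_apply, Matrix.sub_apply]
    by_cases h : i = j <;> simp [h] <;> ring
  -- powers
  have hpow : ∀ n : ℕ, M ^ n = (seqab t n).1 • 1 + (seqab t n).2 • K := by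
    intro n
    induction n with
    | zero => simp [seqab]
    | succ n ih =>
      rw [pow_succ, ih, hMt]
      simp only [add_mul, mul_add, Matrix.smul_mul, Matrix.mul_smul, mul_one, one_mul,
        smul_smul, hK2, seqab]
      ext i j
      simp [Matrix.one_apply, Matrix.add_apply, Matrix.smul_apply]
      by_cases h : i = j <;> simp [h] <;> ring
  have hBn : ∀ n : ℕ, ∀ i j : Fin 2, |(M ^ n) i j| ≤ C := by
    intro n i j
    have := hC (B ^ n) (pow_mem hB n) i j
    rwa [Units.val_pow_eq_pow_val] at this
  rcases eq_or_lt_of_le ht1 with h1 | h1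
  · -- t = 1 : K ≠ 0, M^n = 1 + n • K
    have hseq : ∀ n : ℕ, seqab t n = (1, (n : ℝ)) := by
      intro n
      induction n with
      | zero => simp [seqab]
      | succ n ih =>
        rw [← h1] at ih ⊢
        simp [seqab, ih]
        push_cast
        ring
    have hKne : K ≠ 0 := by
      intro h
      apply hne
      rw [hMt, h, ← h1]; simp
    obtain ⟨i, j, hij⟩ : ∃ i j, K i j ≠ 0 := by
      by_contra h
      push_neg at h
      exact hKne (by ext i j; simp [h])
    obtain ⟨n, hn⟩ := exists_nat_gt ((C + 1) / |K i j|)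
    have hpos : (0:ℝ) < |K i j| := abs_pos.mpr hij
    have hb := hBn n i j
    rw [hpow n, hseq n] at hb
    have this : |(n : ℝ) * K i j| - 1 ≤ C := by
      have h1' : |((1:ℝ) • (1 : Matrix (Fin 2) (Fin 2) ℝ) + (n:ℝ) • K) i j| =
          |(1 : Matrix (Fin 2) (Fin 2) ℝ) i j + (n:ℝ) * K i j| := by
        simp [Matrix.add_apply, Matrix.smul_apply]
      rw [h1'] at hb
      have h2' : |(1 : Matrix (Fin 2) (Fin 2) ℝ) i j| ≤ 1 := by
        by_cases h : i = j <;> simp [Matrix.one_apply, h]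
      have h4 := abs_add_le ((1 : Matrix (Fin 2) (Fin 2) ℝ) i j + (n:ℝ) * K i j)
        (-((1 : Matrix (Fin 2) (Fin 2) ℝ) i j))
      rw [abs_neg] at h4
      have h5 : (1 : Matrix (Fin 2) (Fin 2) ℝ) i j + (n:ℝ) * K i j
          + -((1 : Matrix (Fin 2) (Fin 2) ℝ) i j) = (n:ℝ) * K i j := by ring
      rw [h5] at h4
      linarith
    rw [abs_mul, Nat.abs_cast] at this
    rw [div_lt_iff₀ hpos] at hn
    linarith
  · -- t > 1 : trace M^n = 2 a_n ≥ 2 t^n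
    have htrK : Matrix.trace K = 0 := by
      rw [hK]; simp [htrM]; ring
    have hab : ∀ n : ℕ, (t:ℝ)^n ≤ (seqab t n).1 ∧ 0 ≤ (seqab t n).2 := by
      intro n
      induction n with
      | zero => simp [seqab]
      | succ n ih =>
        obtain ⟨ha, hb⟩ := ih
        constructor
        · show t^(n+1) ≤ t * (seqab t n).1 + (t^2-1) * (seqab t n).2
          have h0 : (0:ℝ) < t := by linarith
          have hp : (0:ℝ) ≤ t^n := pow_nonneg h0.le n
          calc t^(n+1) = t * t^n := by ring
            _ ≤ t * (seqab t n).1 := by nlinarith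
            _ ≤ t * (seqab t n).1 + (t^2-1) * (seqab t n).2 := by
                nlinarith [mul_nonneg (by nlinarith : (0:ℝ) ≤ t^2-1) hb]
        · show 0 ≤ (seqab t n).1 + t * (seqab t n).2
          have h0 : (0:ℝ) < t := by linarith
          nlinarith [pow_nonneg h0.le n]
    obtain ⟨n, hn⟩ := pow_unbounded_of_one_lt C h1
    have htrn : Matrix.trace (M ^ n) = 2 * (seqab t n).1 := by
      rw [hpow n]
      simp [Matrix.trace_add, Matrix.trace_smul, htrK]
      ring
    have hb1 := hBn n 0 0
    have hb2 := hBn n 1 1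
    have htr2 : Matrix.trace (M ^ n) ≤ 2 * C := by
      rw [Matrix.trace_fin_two]
      have := abs_le.mp hb1
      have := abs_le.mp hb2
      linarith [(abs_le.mp hb1).2, (abs_le.mp hb2).2]
    rw [htrn] at htr2
    have := (hab n).1
    linarith

theorem stmt_12 (G : Subgroup (GL (Fin 2) ℝ)) (hG : MatBounded G)
    (A : GL (Fin 2) ℝ) (hA : A ∈ G)
    (hdet : Matrix.det (A : Matrix (Fin 2) (Fin 2) ℝ) = 1)
    (h1 : (A : Matrix (Fin 2) (Fin 2) ℝ) ≠ 1)
    (h2 : (A : Matrix (Fin 2) (Fin 2) ℝ) ≠ -1)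
    (J : Matrix (Fin 2) (Fin 2) ℝ)
    (hJ : J = (A : Matrix (Fin 2) (Fin 2) ℝ) -
      (Matrix.trace (A : Matrix (Fin 2) (Fin 2) ℝ) / 2) • (1 : Matrix (Fin 2) (Fin 2) ℝ)) :
    Matrix.trace J = 0 ∧
      J * J = (-(1 - (Matrix.trace (A : Matrix (Fin 2) (Fin 2) ℝ) / 2) ^ 2)) •
        (1 : Matrix (Fin 2) (Fin 2) ℝ) ∧
      0 < 1 - (Matrix.trace (A : Matrix (Fin 2) (Fin 2) ℝ) / 2) ^ 2 ∧
      |Matrix.trace (A : Matrix (Fin 2) (Fin 2) ℝ)| < 2 := by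
  set M : Matrix (Fin 2) (Fin 2) ℝ := (A : Matrix (Fin 2) (Fin 2) ℝ) with hM
  set tr : ℝ := Matrix.trace M with htr
  have htr1 : Matrix.trace (1 : Matrix (Fin 2) (Fin 2) ℝ) = 2 := by
    simp [Matrix.trace_one]
  have hJtr : Matrix.trace J = 0 := by
    rw [hJ]
    rw [Matrix.trace_sub, Matrix.trace_smul, htr1]
    simp [← htr]
  have hJ2 : J * J = (-(1 - (tr / 2) ^ 2)) • (1 : Matrix (Fin 2) (Fin 2) ℝ) := by
    have hch := ch2 M
    rw [hJ]
    simp only [sub_mul, mul_sub, Matrix.smul_mul, Matrix.mul_smul, mul_one, one_mul, hch,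
      hdet, ← htr]
    ext i j
    simp [Matrix.one_apply, Matrix.smul_apply, Matrix.sub_apply]
    by_cases h : i = j <;> simp [h] <;> ring
  have hpos : 0 < 1 - (tr / 2) ^ 2 := by
    by_contra hcon
    push_neg at hcon
    have htr4 : 4 ≤ tr ^ 2 := by nlinarith
    -- apply key to A * A
    have hcoe : ((A * A : GL (Fin 2) ℝ) : Matrix (Fin 2) (Fin 2) ℝ) = M * M := by
      simp [hM]
    have htrMM : Matrix.trace (M * M) = tr ^ 2 - 2 := by
      rw [ch2 M, Matrix.trace_sub, Matrix.trace_smul, Matrix.trace_smul, htr1, hdet, ← htr]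
      simp
      ring
    apply key G hG (A * A) (mul_mem hA hA)
    · rw [hcoe, Matrix.det_mul, hdet]; ring
    · rw [hcoe, htrMM]; linarith
    · rw [hcoe]
      intro hMM
      have htr2 : tr ^ 2 = 4 := by
        have := htrMM
        rw [hMM, htr1] at this
        linarith
      have htrne : tr ≠ 0 := by intro h; rw [h] at htr2; norm_num at htr2
      have hMscal : M = (2 / tr) • (1 : Matrix (Fin 2) (Fin 2) ℝ) := by
        have hch := ch2 M
        rw [hMM, hdet, ← htr] at hch
        -- 1 = tr • M - 1 • 1
        ext i j
        have := congrFun (congrFun hch i) j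
        simp [Matrix.one_apply, Matrix.smul_apply] at this ⊢
        by_cases h : i = j
        · simp [h] at this ⊢
          field_simp
          linarith [this]
        · simp [h] at this ⊢
          rcases this with h' | h'
          · exact absurd h' htrne
          · exact h'
      have hc : (2 / tr) = 1 ∨ (2 / tr) = -1 := by
        have h4 : (2 / tr) ^ 2 = 1 := by
          field_simp
          linarith
        rcases mul_self_eq_one_iff.mp
            (by rw [← pow_two]; exact h4 : (2/tr) * (2/tr) = 1) with h | h
        · exact Or.inl h
        · exact Or.inr h
      rcases hc with h | h
      · apply h1; rw [hMscal, h]; simp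
      · apply h2; rw [hMscal, h]; simp
  refine ⟨hJtr, hJ2, hpos, ?_⟩
  have : tr ^ 2 < 4 := by nlinarith
  have := abs_lt.mpr (⟨by nlinarith, by nlinarith⟩ : -2 < tr ∧ tr < 2)
  exact this
end

section
/- Let G be a bounded subgroup of GL(2, ℝ) and A₁, A₂ ∈ G with det(A₁) = det(A₂) = 1 and tr(A₁) = tr(A₂). Then A₂ = A₁ or A₂ = A₁⁻¹. -/
/-- Cayley–Hamilton for a 2×2 real matrix of determinant one. -/
lemma stmt14_ch2 (M : Matrix (Fin 2) (Fin 2) ℝ) (hdet : M.det = 1) :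
    M * M = (Matrix.trace M) • M - 1 := by
  rw [Matrix.det_fin_two] at hdet
  ext i j
  fin_cases i <;> fin_cases j <;>
    simp [Matrix.mul_apply, Fin.sum_univ_two, Matrix.trace_fin_two, Matrix.one_apply] <;>
    nlinarith [hdet, sq_nonneg (M 0 0)]

/-- In a bounded subgroup, a determinant-one element has trace at most `2`. -/
lemma stmt14_trace_le_two (G : Subgroup (GL (Fin 2) ℝ)) (hG : MatBounded G)
    {B : GL (Fin 2) ℝ} (hB : B ∈ G)
    (hdet : Matrix.det (B : Matrix (Fin 2) (Fin 2) ℝ) = 1) :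
    Matrix.trace (B : Matrix (Fin 2) (Fin 2) ℝ) ≤ 2 := by
  obtain ⟨C, hC⟩ := hG
  by_contra hcon
  push_neg at hcon
  set M : Matrix (Fin 2) (Fin 2) ℝ := (B : Matrix (Fin 2) (Fin 2) ℝ) with hM
  set t : ℝ := Matrix.trace M with ht
  have hCH := stmt14_ch2 M hdet
  set x : ℕ → ℝ := fun n => Matrix.trace (M ^ n) with hx
  have hx0 : x 0 = 2 := by simp [hx]
  have hx1 : x 1 = t := by simp [hx, ht]
  have hrec : ∀ n, x (n + 2) = t * x (n + 1) - x n := by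
    intro n
    have : M ^ (n + 2) = t • M ^ (n + 1) - M ^ n := by
      calc M ^ (n + 2) = M ^ n * M * M := by rw [pow_succ, pow_succ]
        _ = M ^ n * (M * M) := by rw [mul_assoc]
        _ = M ^ n * (t • M - 1) := by rw [hCH]
        _ = t • (M ^ n * M) - M ^ n := by
            rw [Matrix.mul_sub, Matrix.mul_smul, Matrix.mul_one]
        _ = t • M ^ (n + 1) - M ^ n := by rw [← pow_succ]
    simp [hx, this, Matrix.trace_sub, Matrix.trace_smul, smul_eq_mul]
  have hgrow : ∀ n, 2 + n * (t - 2) ≤ x n ∧ x n + (t - 2) ≤ x (n + 1) := by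
    intro n
    induction n with
    | zero => constructor <;> simp [hx0, hx1]
    | succ n ih =>
      obtain ⟨ih1, ih2⟩ := ih
      have h2 : (2 : ℝ) ≤ x n := by nlinarith [Nat.cast_nonneg (α := ℝ) n]
      have hr := hrec n
      constructor
      · push_cast; nlinarith
      · nlinarith
  have hbound : ∀ n : ℕ, x n ≤ 2 * C := by
    intro n
    have hmem : B ^ n ∈ G := pow_mem hB n
    have h1 := hC (B ^ n) hmem 0 0
    have h2 := hC (B ^ n) hmem 1 1
    have hcoe : ((B ^ n : GL (Fin 2) ℝ) : Matrix (Fin 2) (Fin 2) ℝ) = M ^ n := rfl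
    rw [hcoe] at h1 h2
    have : x n = (M ^ n) 0 0 + (M ^ n) 1 1 := by
      simp [hx, Matrix.trace_fin_two]
    rw [this]
    linarith [(abs_le.mp h1).2, (abs_le.mp h2).2]
  obtain ⟨n, hn⟩ := exists_nat_gt ((2 * C - 2) / (t - 2))
  have ht2 : 0 < t - 2 := by linarith
  have : 2 * C - 2 < n * (t - 2) := by
    rw [div_lt_iff₀ ht2] at hn; linarith
  have := (hgrow n).1
  have := hbound n
  linarith

/-- In a bounded subgroup, a determinant-one element of trace `2` is the identity. -/
lemma stmt14_eq_one_of_trace_two (G : Subgroup (GL (Fin 2) ℝ)) (hG : MatBounded G)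
    {B : GL (Fin 2) ℝ} (hB : B ∈ G)
    (hdet : Matrix.det (B : Matrix (Fin 2) (Fin 2) ℝ) = 1)
    (htr : Matrix.trace (B : Matrix (Fin 2) (Fin 2) ℝ) = 2) :
    B = 1 := by
  obtain ⟨C, hC⟩ := hG
  set M : Matrix (Fin 2) (Fin 2) ℝ := (B : Matrix (Fin 2) (Fin 2) ℝ) with hM
  set N : Matrix (Fin 2) (Fin 2) ℝ := M - 1 with hN
  rw [Matrix.det_fin_two] at hdet
  rw [Matrix.trace_fin_two] at htr
  have hN2 : N * N = 0 := by
    ext i j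
    fin_cases i <;> fin_cases j <;>
      simp [hN, Matrix.mul_apply, Fin.sum_univ_two, Matrix.one_apply,
        Matrix.sub_apply]
    · linear_combination -hdet + M 0 0 * htr
    · linear_combination M 0 1 * htr
    · linear_combination M 1 0 * htr
    · linear_combination -hdet + M 1 1 * htr
  have hpow : ∀ n : ℕ, M ^ n = 1 + (n : ℝ) • N := by
    intro n
    induction n with
    | zero => simp
    | succ n ih =>
      have hMN : M = 1 + N := by simp [hN]
      rw [pow_succ, ih, hMN, mul_add, mul_one, add_mul, one_mul, smul_mul_assoc,
        hN2, smul_zero, add_zero]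
      push_cast
      rw [add_smul, one_smul]
      abel
  have hNzero : N = 0 := by
    ext i j
    by_contra hne
    obtain ⟨n, hn⟩ := exists_nat_gt ((C + 1) / |N i j|)
    have habs : 0 < |N i j| := abs_pos.mpr hne
    have h1 : (C + 1) < n * |N i j| := by
      rw [div_lt_iff₀ habs] at hn; linarith
    have hmem : B ^ n ∈ G := pow_mem hB n
    have hb := hC (B ^ n) hmem i j
    have hcoe : ((B ^ n : GL (Fin 2) ℝ) : Matrix (Fin 2) (Fin 2) ℝ) = M ^ n := rfl
    rw [hcoe, hpow n] at hb
    have hone : |(1 : Matrix (Fin 2) (Fin 2) ℝ) i j| ≤ 1 := by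
      fin_cases i <;> fin_cases j <;> simp [Matrix.one_apply]
    have : ((1 : Matrix (Fin 2) (Fin 2) ℝ) + (n : ℝ) • N) i j
        = (1 : Matrix (Fin 2) (Fin 2) ℝ) i j + (n : ℝ) * N i j := by
      simp [Matrix.add_apply]
    rw [this] at hb
    have h4 : |(n : ℝ) * N i j| ≤ |(1 : Matrix (Fin 2) (Fin 2) ℝ) i j + (n:ℝ) * N i j|
        + |(1 : Matrix (Fin 2) (Fin 2) ℝ) i j| := by
      calc |(n : ℝ) * N i j|
          = |(1 : Matrix (Fin 2) (Fin 2) ℝ) i j + (n:ℝ) * N i j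
              - (1 : Matrix (Fin 2) (Fin 2) ℝ) i j| := by ring_nf
        _ ≤ _ := abs_sub _ _
    rw [abs_mul, Nat.abs_cast] at h4
    linarith
  have hM1 : M = 1 := by
    have : M = 1 + N := by simp [hN]
    rw [this, hNzero, add_zero]
  exact Units.ext hM1

/-- The purely polynomial heart of the argument: the traceless matrices
`A₁ - A₂` and `A₁ - A₂⁻¹` anticommute and both have positive determinant,
which is impossible in `M₂(ℝ)` (signature of the form `-det` is `(2,1)`). -/
lemma stmt14_keylemma (a b c d p q r w : ℝ)
    (hd1 : a*d - b*c = 1) (hd2 : p*w - q*r = 1) (htr : a + d = p + w)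
    (hs : a*w - b*r - c*q + d*p < 2) (hu : a*p + b*r + c*q + d*w < 2) : False := by
  have h1 : (a-p)^2 + (b-q)*(c-r) = (a*w - b*r - c*q + d*p) - 2 := by
    linear_combination (a-p)*htr - hd1 - hd2
  have h2 : (a-w)^2 + (b+q)*(c+r) = (a*p + b*r + c*q + d*w) - 2 := by
    linear_combination (a-w)*htr - hd1 - hd2
  have h3 : 2*(a-p)*(a-w) + (b-q)*(c+r) + (c-r)*(b+q) = 0 := by
    linear_combination 2*a*htr - 2*hd1 + 2*hd2
  have hm2 : (b - q) ≠ 0 := by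
    intro h0
    rw [h0, zero_mul, add_zero] at h1
    nlinarith [sq_nonneg (a-p)]
  have hkey : ((b+q)*(a-p) - (b-q)*(a-w))^2
      = (b+q)^2 * ((a*w - b*r - c*q + d*p) - 2)
        + (b-q)^2 * ((a*p + b*r + c*q + d*w) - 2) := by
    linear_combination (b+q)^2 * h1 + (b-q)^2 * h2 - (b+q)*(b-q)*h3
  have t1 : (b+q)^2 * ((a*w - b*r - c*q + d*p) - 2) ≤ 0 :=
    mul_nonpos_of_nonneg_of_nonpos (sq_nonneg _) (by linarith)
  have t2 : (b-q)^2 * ((a*p + b*r + c*q + d*w) - 2) < 0 :=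
    mul_neg_of_pos_of_neg (by positivity) (by linarith)
  nlinarith [sq_nonneg ((b+q)*(a-p) - (b-q)*(a-w))]

theorem stmt_14 (G : Subgroup (GL (Fin 2) ℝ)) (hG : MatBounded G)
    (A₁ A₂ : GL (Fin 2) ℝ) (h₁ : A₁ ∈ G) (h₂ : A₂ ∈ G)
    (hdet₁ : Matrix.det (A₁ : Matrix (Fin 2) (Fin 2) ℝ) = 1)
    (hdet₂ : Matrix.det (A₂ : Matrix (Fin 2) (Fin 2) ℝ) = 1)
    (htr : Matrix.trace (A₁ : Matrix (Fin 2) (Fin 2) ℝ) =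
      Matrix.trace (A₂ : Matrix (Fin 2) (Fin 2) ℝ)) :
    A₂ = A₁ ∨ A₂ = A₁⁻¹ := by
  set Ma : Matrix (Fin 2) (Fin 2) ℝ := (A₁ : Matrix (Fin 2) (Fin 2) ℝ) with hMa
  set Mb : Matrix (Fin 2) (Fin 2) ℝ := (A₂ : Matrix (Fin 2) (Fin 2) ℝ) with hMb
  -- the matrix of A₂⁻¹
  have hKinv : ((A₂⁻¹ : GL (Fin 2) ℝ) : Matrix (Fin 2) (Fin 2) ℝ)
      = !![Mb 1 1, -Mb 0 1; -Mb 1 0, Mb 0 0] := by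
    rw [Matrix.coe_units_inv, Matrix.inv_def, Matrix.adjugate_fin_two, hdet₂]
    norm_num [hMb]
  set K : Matrix (Fin 2) (Fin 2) ℝ := !![Mb 1 1, -Mb 0 1; -Mb 1 0, Mb 0 0] with hK
  -- the two products and their data
  have hPcoe : ((A₁ * A₂⁻¹ : GL (Fin 2) ℝ) : Matrix (Fin 2) (Fin 2) ℝ) = Ma * K := by
    rw [Units.val_mul, hKinv]
  have hQcoe : ((A₁ * A₂ : GL (Fin 2) ℝ) : Matrix (Fin 2) (Fin 2) ℝ) = Ma * Mb := rfl
  have hdetK : K.det = 1 := by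
    rw [hK, Matrix.det_fin_two_of]
    rw [Matrix.det_fin_two] at hdet₂
    linarith
  have hdetP : Matrix.det ((A₁ * A₂⁻¹ : GL (Fin 2) ℝ) : Matrix (Fin 2) (Fin 2) ℝ) = 1 := by
    rw [hPcoe, Matrix.det_mul, hdetK, hdet₁, mul_one]
  have hdetQ : Matrix.det ((A₁ * A₂ : GL (Fin 2) ℝ) : Matrix (Fin 2) (Fin 2) ℝ) = 1 := by
    rw [hQcoe, Matrix.det_mul, hdet₁, hdet₂, mul_one]
  have hPmem : A₁ * A₂⁻¹ ∈ G := mul_mem h₁ (inv_mem h₂)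
  have hQmem : A₁ * A₂ ∈ G := mul_mem h₁ h₂
  have hsle := stmt14_trace_le_two G hG hPmem hdetP
  have hule := stmt14_trace_le_two G hG hQmem hdetQ
  -- trace computations
  have hs_eq : Matrix.trace ((A₁ * A₂⁻¹ : GL (Fin 2) ℝ) : Matrix (Fin 2) (Fin 2) ℝ)
      = Ma 0 0 * Mb 1 1 - Ma 0 1 * Mb 1 0 - Ma 1 0 * Mb 0 1 + Ma 1 1 * Mb 0 0 := by
    rw [hPcoe, hK]
    simp [Matrix.trace_fin_two, Matrix.mul_apply, Fin.sum_univ_two]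
    ring
  have hu_eq : Matrix.trace ((A₁ * A₂ : GL (Fin 2) ℝ) : Matrix (Fin 2) (Fin 2) ℝ)
      = Ma 0 0 * Mb 0 0 + Ma 0 1 * Mb 1 0 + Ma 1 0 * Mb 0 1 + Ma 1 1 * Mb 1 1 := by
    rw [hQcoe]
    simp [Matrix.trace_fin_two, Matrix.mul_apply, Fin.sum_univ_two]
    ring
  rcases eq_or_lt_of_le hsle with hs2 | hslt
  · -- trace(A₁A₂⁻¹) = 2 : then A₁A₂⁻¹ = 1 and A₂ = A₁
    left
    have := stmt14_eq_one_of_trace_two G hG hPmem hdetP hs2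
    have h := mul_inv_eq_one.mp this
    exact h.symm
  rcases eq_or_lt_of_le hule with hu2 | hult
  · -- trace(A₁A₂) = 2 : then A₁A₂ = 1 and A₂ = A₁⁻¹
    right
    have := stmt14_eq_one_of_trace_two G hG hQmem hdetQ hu2
    exact (inv_eq_iff_mul_eq_one.mpr this).symm
  · exfalso
    rw [hs_eq] at hslt
    rw [hu_eq] at hult
    rw [Matrix.det_fin_two] at hdet₁ hdet₂
    rw [Matrix.trace_fin_two, Matrix.trace_fin_two] at htr
    exact stmt14_keylemma (Ma 0 0) (Ma 0 1) (Ma 1 0) (Ma 1 1)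
      (Mb 0 0) (Mb 0 1) (Mb 1 0) (Mb 1 1) hdet₁ hdet₂ htr
      (by linarith) (by linarith)
end

section
/- Let G be a bounded subgroup of GL(2, ℝ) such that every element of G with determinant 1 is a scalar (±I). Then either every element of G has determinant 1 (so G ⊆ {±I}), or there exists A ∈ G with A² = I, det(A) = −1, and G ⊆ {I, −I, A, −A}. -/
section

variable {K : Type*} [Field K] [LinearOrder K] [IsStrictOrderedRing K]

theorem abs_le_one_of_forall_abs_pow_le [Archimedean K] {x C : K} (h : ∀ n : ℕ, |x ^ n| ≤ C) :
    |x| ≤ 1 := by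
  by_contra! hx
  obtain ⟨n, hn⟩ := pow_unbounded_of_one_lt C hx
  exact (h n).not_gt (by rwa [abs_pow])

theorem Units.abs_eq_one_of_forall_abs_zpow_le [Archimedean K] (u : Kˣ) {C : K}
    (h : ∀ n : ℤ, |((u ^ n : Kˣ) : K)| ≤ C) : |(u : K)| = 1 := by
  have hu : |(u : K)| ≤ 1 := abs_le_one_of_forall_abs_pow_le fun n => by exact_mod_cast h n
  have hu_inv : |((u⁻¹ : Kˣ) : K)| ≤ 1 :=
    abs_le_one_of_forall_abs_pow_le fun n => by simpa [← zpow_natCast, ← zpow_neg] using h (-n)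
  have hmul : |(u : K)| * |((u⁻¹ : Kˣ) : K)| = 1 := by rw [← abs_mul, Units.mul_inv, abs_one]
  nlinarith [abs_nonneg (u : K), abs_nonneg ((u⁻¹ : Kˣ) : K)]

/-- Off the diagonal, `M * M = -1` reads `tr M • (b, c) = 0`; `tr M ≠ 0` would force `b = c = 0`
and `a ^ 2 = -1`, so `tr M = 0` and then `det M = 1`. -/
theorem Matrix.det_eq_one_of_mul_self_eq_neg_one {M : Matrix (Fin 2) (Fin 2) K}
    (hM : M * M = -1) : M.det = 1 := by
  have h := congrFun₂ hM
  have h00 := h 0 0; have h01 := h 0 1; have h10 := h 1 0; have h11 := h 1 1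
  simp only [Fin.isValue, Matrix.mul_apply, Fin.sum_univ_two, Matrix.neg_apply,
    Matrix.one_apply_eq, ne_eq, zero_ne_one, not_false_eq_true, Matrix.one_apply_ne, neg_zero,
    one_ne_zero] at h00 h01 h10 h11
  rw [Matrix.det_fin_two]
  nlinarith [sq_nonneg (M 0 0 + M 1 1), sq_nonneg (M 0 0), sq_nonneg (M 1 1)]

end

theorem MatBounded.abs_det_le {G : Subgroup (GL (Fin 2) ℝ)} (hG : MatBounded G) :
    ∃ D : ℝ, ∀ A ∈ G, |(A : Matrix (Fin 2) (Fin 2) ℝ).det| ≤ D := by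
  obtain ⟨C, hC⟩ := hG
  refine ⟨2 * C ^ 2, fun A hA => ?_⟩
  have hC' := hC A hA
  rw [Matrix.det_fin_two]
  calc _ ≤ |(A : Matrix (Fin 2) (Fin 2) ℝ) 0 0| * |(A : Matrix (Fin 2) (Fin 2) ℝ) 1 1| +
        |(A : Matrix (Fin 2) (Fin 2) ℝ) 0 1| * |(A : Matrix (Fin 2) (Fin 2) ℝ) 1 0| := by
        rw [← abs_mul, ← abs_mul]; exact abs_sub _ _
    _ ≤ C * C + C * C := by
        gcongr <;> first | exact hC' _ _ | exact (abs_nonneg _).trans (hC' 0 0)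
    _ = 2 * C ^ 2 := by ring

theorem MatBounded.det_eq_one_or_neg_one {G : Subgroup (GL (Fin 2) ℝ)} (hG : MatBounded G)
    {A : GL (Fin 2) ℝ} (hA : A ∈ G) :
    (A : Matrix (Fin 2) (Fin 2) ℝ).det = 1 ∨ (A : Matrix (Fin 2) (Fin 2) ℝ).det = -1 := by
  obtain ⟨D, hD⟩ := hG.abs_det_le
  rw [← Matrix.GeneralLinearGroup.val_det_apply, ← abs_eq zero_le_one]
  refine (Matrix.GeneralLinearGroup.det A).abs_eq_one_of_forall_abs_zpow_le (C := D) fun n => ?_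
  rw [← map_zpow, Matrix.GeneralLinearGroup.val_det_apply]
  exact hD _ (zpow_mem hA n)

theorem stmt_17 (G : Subgroup (GL (Fin 2) ℝ)) (hG : MatBounded G)
    (hscalar : ∀ A ∈ G, Matrix.det (A : Matrix (Fin 2) (Fin 2) ℝ) = 1 →
      (A : Matrix (Fin 2) (Fin 2) ℝ) = 1 ∨ (A : Matrix (Fin 2) (Fin 2) ℝ) = -1) :
    (∀ A ∈ G, Matrix.det (A : Matrix (Fin 2) (Fin 2) ℝ) = 1 ∧
        ((A : Matrix (Fin 2) (Fin 2) ℝ) = 1 ∨ (A : Matrix (Fin 2) (Fin 2) ℝ) = -1)) ∨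
      ∃ A ∈ G, (A : Matrix (Fin 2) (Fin 2) ℝ) * (A : Matrix (Fin 2) (Fin 2) ℝ) = 1 ∧
        Matrix.det (A : Matrix (Fin 2) (Fin 2) ℝ) = -1 ∧
        ∀ B ∈ G, (B : Matrix (Fin 2) (Fin 2) ℝ) = 1 ∨ (B : Matrix (Fin 2) (Fin 2) ℝ) = -1 ∨
          (B : Matrix (Fin 2) (Fin 2) ℝ) = (A : Matrix (Fin 2) (Fin 2) ℝ) ∨
          (B : Matrix (Fin 2) (Fin 2) ℝ) = -(A : Matrix (Fin 2) (Fin 2) ℝ) := by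
  by_cases hall : ∀ A ∈ G, Matrix.det (A : Matrix (Fin 2) (Fin 2) ℝ) = 1
  · exact Or.inl fun A hA => ⟨hall A hA, hscalar A hA (hall A hA)⟩
  push Not at hall
  obtain ⟨A, hA, hA_ne⟩ := hall
  have hA_det : Matrix.det (A : Matrix (Fin 2) (Fin 2) ℝ) = -1 :=
    (hG.det_eq_one_or_neg_one hA).resolve_left hA_ne
  have hmul_A : ∀ B ∈ G, Matrix.det (B : Matrix (Fin 2) (Fin 2) ℝ) = -1 →
      (B : Matrix (Fin 2) (Fin 2) ℝ) * A = 1 ∨ (B : Matrix (Fin 2) (Fin 2) ℝ) * A = -1 :=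
    fun B hB hB_det => by
      simpa only [Units.val_mul] using
        hscalar (B * A) (mul_mem hB hA) (by simp [Matrix.det_mul, hB_det, hA_det])
  have hA_sq : (A : Matrix (Fin 2) (Fin 2) ℝ) * A = 1 :=
    (hmul_A A hA hA_det).resolve_right fun h => by
      linarith [Matrix.det_eq_one_of_mul_self_eq_neg_one h]
  refine Or.inr ⟨A, hA, hA_sq, hA_det, fun B hB => ?_⟩
  rcases hG.det_eq_one_or_neg_one hB with hB_det | hB_det
  · rcases hscalar B hB hB_det with h | h <;> simp [h]
  · have hB_eq : (B : Matrix (Fin 2) (Fin 2) ℝ) = B * A * A := by rw [mul_assoc, hA_sq, mul_one]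
    rcases hmul_A B hB hB_det with h | h <;> rw [hB_eq, h] <;> simp
end

section
/- Let V be a real vector space of dimension ≥ 2 and Q : V → ℝ a function such that Q(λv) = λ²Q(v) for all λ ∈ ℝ, v ∈ V, and such that the restriction of Q to every 2-dimensional subspace is a quadratic form (comes from a symmetric bilinear form on that subspace). Then Q is a quadratic form on V, i.e., ⟨u,v⟩ := (Q(u+v) − Q(u) − Q(v))/2 is a symmetric bilinear form on V with Q(v) = ⟨v,v⟩. -/
/-!
Any two vectors lie in a common plane, on which `Q` agrees with a quadratic form. Hence `Q`
satisfies `Q (a • v) = a² Q v`, the parallelogram law, and its polarization is homogeneous in the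
first argument. The Jordan–von Neumann argument (the parallelogram law at the midpoint of `x` and
`x'`) turns these into additivity of the polarization, so `Q` is a quadratic form on `V`, whose
associated bilinear form is half its polarization.
-/

open Module QuadraticMap

section Planes

variable {K V : Type*} [DivisionRing K] [AddCommGroup V] [Module K V]

theorem exists_linearIndependent_extend_of_le_rank {n m : ℕ} {v : Fin n → V}
    (hv : LinearIndependent K v) (hnm : n ≤ m) (hm : m ≤ Module.rank K V) :
    ∃ w : Fin m → V, LinearIndependent K w ∧ Set.range v ⊆ Set.range w := by
  induction m, hnm using Nat.le_induction with
  | base => exact ⟨v, hv, subset_rfl⟩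
  | succ m _ ih =>
    have hm' : (m : Cardinal) < Module.rank K V := lt_of_lt_of_le (by norm_cast; omega) hm
    obtain ⟨w, hw, hvw⟩ := ih hm'.le
    obtain ⟨x, hx⟩ := exists_linearIndependent_snoc_of_lt_rank hw hm'
    exact ⟨_, hx, hvw.trans (by simp [Set.subset_insert])⟩

theorem Submodule.exists_le_finrank_eq (S : Submodule K V) [FiniteDimensional K S] {n : ℕ}
    (hS : finrank K S ≤ n) (hn : n ≤ Module.rank K V) :
    ∃ W : Submodule K V, S ≤ W ∧ finrank K W = n := by
  let b := Module.finBasis K S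
  obtain ⟨w, hw, hbw⟩ := exists_linearIndependent_extend_of_le_rank
    (b.linearIndependent.map' S.subtype S.ker_subtype) hS hn
  refine ⟨Submodule.span K (Set.range w), ?_, by simpa using finrank_span_eq_card hw⟩
  calc S = Submodule.span K (Set.range (S.subtype ∘ b)) := by
        rw [Set.range_comp, Submodule.span_image, b.span_eq, Submodule.map_top, S.range_subtype]
    _ ≤ Submodule.span K (Set.range w) := Submodule.span_mono hbw

theorem exists_finrank_eq_two_mem (h : 2 ≤ Module.rank K V) (a b : V) :
    ∃ W : Submodule K V, finrank K W = 2 ∧ a ∈ W ∧ b ∈ W := by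
  have := FiniteDimensional.span_of_finite K (Set.finite_range ![a, b])
  obtain ⟨W, hW, hW2⟩ := (Submodule.span K (Set.range ![a, b])).exists_le_finrank_eq
    (finrank_range_le_card (R := K) ![a, b]) h
  exact ⟨W, hW2, hW (Submodule.subset_span ⟨0, rfl⟩),
    hW (Submodule.subset_span ⟨1, rfl⟩)⟩

end Planes

theorem QuadraticMap.map_add_add_map_sub {R M N : Type*} [CommRing R] [AddCommGroup M]
    [Module R M] [AddCommGroup N] [Module R N] (Q : QuadraticMap R M N) (x y : M) :
    Q (x + y) + Q (x - y) = 2 • Q x + 2 • Q y := by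
  have h := Q.polar_neg_right x y
  rw [polar, polar, Q.map_neg, ← sub_eq_add_neg] at h
  rw [← sub_eq_zero, ← add_neg_eq_zero.mpr h]
  abel

section Polarization

variable {R M : Type*} [CommRing R] [AddCommGroup M] [Module R M]

theorem polar_add_left_of_parallelogram [Invertible (2 : R)] {f : M → R}
    (h_par : ∀ x y, f (x + y) + f (x - y) = 2 * f x + 2 * f y)
    (h_smul : ∀ (a : R) x y, polar f (a • x) y = a • polar f x y) (x x' y : M) :
    polar f (x + x') y = polar f x y + polar f x' y := by
  have h_zero : f 0 = 0 := by simpa [polar] using h_smul 0 0 0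
  have h_two : ∀ z, f ((2 : R) • z) = 4 * f z := fun z => by
    simpa [two_smul, h_zero, ← two_mul, ← mul_assoc, show (2 : R) * 2 = 4 by norm_num]
      using h_par z z
  set m : M := ⅟(2 : R) • (x + x')
  have hm : (2 : R) • m = x + x' := by simp [m, smul_smul]
  have h₁ := h_par (x + y) (x' + y)
  have h₂ := h_par x x'
  rw [show x + y + (x' + y) = (2 : R) • (m + y) by rw [smul_add, hm, two_smul]; abel,
    add_sub_add_right_eq_sub, h_two] at h₁
  rw [← hm, h_two] at h₂
  rw [← hm, h_smul, smul_eq_mul]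
  refine (isUnit_of_invertible (2 : R)).mul_left_cancel ?_
  simp only [polar]
  linear_combination h₁ - h₂

end Polarization

section PairwiseQuadratic

variable {R M : Type*} [CommRing R] [AddCommGroup M] [Module R M]

def IsPairwiseQuadratic (Q : M → R) : Prop :=
  ∀ u v : M, ∃ (W : Submodule R M) (q : QuadraticMap R W R),
    u ∈ W ∧ v ∈ W ∧ ∀ w : W, Q w = q w

namespace IsPairwiseQuadratic

variable {Q : M → R}

theorem map_smul (hQ : IsPairwiseQuadratic Q) (a : R) (v : M) : Q (a • v) = (a * a) • Q v := by
  obtain ⟨W, q, hv, -, hq⟩ := hQ v v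
  simpa only [← hq, Submodule.coe_smul, Submodule.coe_mk] using q.map_smul a ⟨v, hv⟩

theorem polar_smul_left (hQ : IsPairwiseQuadratic Q) (a : R) (u v : M) :
    polar Q (a • u) v = a • polar Q u v := by
  obtain ⟨W, q, hu, hv, hq⟩ := hQ u v
  simpa only [polar, ← hq, Submodule.coe_add, Submodule.coe_smul, Submodule.coe_mk]
    using q.polar_smul_left a ⟨u, hu⟩ ⟨v, hv⟩

theorem map_add_add_map_sub (hQ : IsPairwiseQuadratic Q) (u v : M) :
    Q (u + v) + Q (u - v) = 2 * Q u + 2 * Q v := by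
  obtain ⟨W, q, hu, hv, hq⟩ := hQ u v
  simpa only [← hq, Submodule.coe_add, Submodule.coe_sub, Submodule.coe_mk, nsmul_eq_mul,
    Nat.cast_ofNat] using q.map_add_add_map_sub ⟨u, hu⟩ ⟨v, hv⟩

theorem polar_add_left [Invertible (2 : R)] (hQ : IsPairwiseQuadratic Q) (x x' y : M) :
    polar Q (x + x') y = polar Q x y + polar Q x' y :=
  polar_add_left_of_parallelogram hQ.map_add_add_map_sub hQ.polar_smul_left x x' y

def toQuadraticMap [Invertible (2 : R)] (hQ : IsPairwiseQuadratic Q) : QuadraticMap R M R :=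
  QuadraticMap.ofPolar Q hQ.map_smul hQ.polar_add_left hQ.polar_smul_left

end IsPairwiseQuadratic

end PairwiseQuadratic

theorem isPairwiseQuadratic_of_finrank_eq_two {K V : Type*} [Field K] [AddCommGroup V]
    [Module K V] (hdim : 2 ≤ Module.rank K V) (Q : V → K)
    (hplane : ∀ W : Submodule K V, finrank K W = 2 →
      ∃ B : W →ₗ[K] W →ₗ[K] K, ∀ w : W, Q w = B w w) :
    IsPairwiseQuadratic Q := by
  intro u v
  obtain ⟨W, hW, hu, hv⟩ := exists_finrank_eq_two_mem hdim u v
  obtain ⟨B, hB⟩ := hplane W hW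
  exact ⟨W, LinearMap.BilinMap.toQuadraticMap B, hu, hv, hB⟩

theorem stmt_18_general (V : Type*) [AddCommGroup V] [Module ℝ V]
    (hdim : (2 : Cardinal) ≤ Module.rank ℝ V)
    (Q : V → ℝ)
    (hplane : ∀ W : Submodule ℝ V, Module.finrank ℝ ↥W = 2 →
      ∃ B : ↥W →ₗ[ℝ] ↥W →ₗ[ℝ] ℝ, (∀ x y : ↥W, B x y = B y x) ∧ ∀ w : ↥W, Q (w : V) = B w w) :
    ∃ B : V →ₗ[ℝ] V →ₗ[ℝ] ℝ, (∀ u v : V, B u v = B v u) ∧ (∀ v : V, Q v = B v v) ∧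
      ∀ u v : V, B u v = (Q (u + v) - Q u - Q v) / 2 := by
  have hQ : IsPairwiseQuadratic Q := isPairwiseQuadratic_of_finrank_eq_two hdim Q fun W hW =>
    (hplane W hW).imp fun _ hB => hB.2
  let q := hQ.toQuadraticMap
  refine ⟨q.associated, q.associated_isSymm ℝ, fun v => (q.associated_eq_self_apply ℝ v).symm,
    fun u v => ?_⟩
  rw [associated_apply, Module.End.smul_def, half_moduleEnd_apply_eq_half_smul, smul_eq_mul,
    invOf_eq_inv, inv_mul_eq_div]
  rfl

theorem stmt_18 (V : Type*) [AddCommGroup V] [Module ℝ V]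
    (hdim : (2 : Cardinal) ≤ Module.rank ℝ V)
    (Q : V → ℝ) (hhom : ∀ (l : ℝ) (v : V), Q (l • v) = l ^ 2 * Q v)
    (hplane : ∀ W : Submodule ℝ V, Module.finrank ℝ ↥W = 2 →
      ∃ B : ↥W →ₗ[ℝ] ↥W →ₗ[ℝ] ℝ, (∀ x y : ↥W, B x y = B y x) ∧ ∀ w : ↥W, Q (w : V) = B w w) :
    ∃ B : V →ₗ[ℝ] V →ₗ[ℝ] ℝ, (∀ u v : V, B u v = B v u) ∧ (∀ v : V, Q v = B v v) ∧
      ∀ u v : V, B u v = (Q (u + v) - Q u - Q v) / 2 :=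
  stmt_18_general V hdim Q hplane
end

section
/- Let V be a real vector space of dimension ≥ 2 and U ⊆ V a subset such that for every 2-dimensional subspace V' ⊆ V there is a positive-definite quadratic form Q' on V' with U ∩ V' = {v ∈ V' : Q'(v) = 1}. Then there exists a positive-definite quadratic form Q on all of V with U = {v ∈ V : Q(v) = 1}. -/
open Module Submodule

lemma grow_aux' {V : Type*} [AddCommGroup V] [Module ℝ V]
    (hdim : (2 : Cardinal) ≤ Module.rank ℝ V)
    (S : Submodule ℝ V) [FiniteDimensional ℝ S] (h : finrank ℝ S < 2) :
    ∃ T : Submodule ℝ V, S ≤ T ∧ FiniteDimensional ℝ T ∧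
      finrank ℝ T = finrank ℝ S + 1 := by
  have hne : S ≠ ⊤ := by
    rintro rfl
    have : Module.rank ℝ (⊤ : Submodule ℝ V) = Module.rank ℝ V := rank_top ℝ V
    rw [← finrank_eq_rank] at this
    rw [← this] at hdim
    have : 2 ≤ finrank ℝ (⊤ : Submodule ℝ V) := by exact_mod_cast hdim
    omega
  obtain ⟨z, -, hz⟩ := SetLike.exists_of_lt
    (show S < (⊤ : Submodule ℝ V) from lt_top_iff_ne_top.mpr hne)
  have hz0 : z ≠ 0 := fun h => hz (h ▸ S.zero_mem)
  refine ⟨S ⊔ (ℝ ∙ z), le_sup_left, inferInstance, ?_⟩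
  have hinf : S ⊓ (ℝ ∙ z) = ⊥ := by
    rw [eq_bot_iff]
    rintro v ⟨hvS, hvz⟩
    obtain ⟨a, rfl⟩ := mem_span_singleton.mp hvz
    rcases eq_or_ne a 0 with rfl | ha
    · simp
    · exfalso
      apply hz
      have : a⁻¹ • (a • z) ∈ S := S.smul_mem _ hvS
      rwa [smul_smul, inv_mul_cancel₀ ha, one_smul] at this
  have := Submodule.finrank_sup_add_finrank_inf_eq S (ℝ ∙ z)
  rw [hinf, finrank_span_singleton hz0] at this
  simpa using this

lemma hex_aux {V : Type*} [AddCommGroup V] [Module ℝ V]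
    (hdim : (2 : Cardinal) ≤ Module.rank ℝ V) (x y : V) :
    ∃ W : Submodule ℝ V, finrank ℝ ↥W = 2 ∧ x ∈ W ∧ y ∈ W := by
  classical
  have key : ∀ (S : Submodule ℝ V), FiniteDimensional ℝ S → finrank ℝ S ≤ 2 →
      ∃ W : Submodule ℝ V, S ≤ W ∧ finrank ℝ ↥W = 2 := by
    intro S hfd hle
    rcases eq_or_lt_of_le hle with heq | hlt
    · exact ⟨S, le_rfl, heq⟩
    obtain ⟨T, hST, hTfd, hT⟩ := grow_aux' hdim S hlt
    rcases eq_or_lt_of_le (show finrank ℝ T ≤ 2 by omega) with heq | hlt'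
    · exact ⟨T, hST, heq⟩
    obtain ⟨T', hTT', hT'fd, hT'⟩ := grow_aux' hdim T hlt'
    exact ⟨T', hST.trans hTT', by omega⟩
  have hfd : FiniteDimensional ℝ (span ℝ ({x, y} : Set V)) :=
    FiniteDimensional.span_of_finite ℝ (Set.toFinite _)
  have hle : finrank ℝ (span ℝ ({x, y} : Set V)) ≤ 2 := by
    refine (finrank_span_le_card _).trans ?_
    simp [Set.toFinset_insert]
    exact (Finset.card_insert_le _ _).trans (by simp)
  obtain ⟨W, hW, h2⟩ := key _ hfd hle
  exact ⟨W, h2, hW (subset_span (by simp)), hW (subset_span (by simp))⟩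


theorem stmt_19 (V : Type*) [AddCommGroup V] [Module ℝ V]
    (hdim : (2 : Cardinal) ≤ Module.rank ℝ V) (U : Set V)
    (hplane : ∀ W : Submodule ℝ V, Module.finrank ℝ ↥W = 2 →
      ∃ Q' : QuadraticForm ℝ ↥W, (∀ w : ↥W, w ≠ 0 → 0 < Q' w) ∧
        ∀ w : ↥W, (w : V) ∈ U ↔ Q' w = 1) :
    ∃ Q : QuadraticForm ℝ V, (∀ v : V, v ≠ 0 → 0 < Q v) ∧ ∀ v : V, v ∈ U ↔ Q v = 1 := by
  classical
  choose Q hpos hU using hplane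
  choose P hP2 hPx hPy using fun x y : V => hex_aux hdim x y
  set f : V → ℝ := fun v => Q (P v v) (hP2 v v) ⟨v, hPx v v⟩ with hfdef
  -- the value Q W hW w depends only on the underlying vector
  have key : ∀ (W₁ W₂ : Submodule ℝ V) (h₁ : Module.finrank ℝ ↥W₁ = 2)
      (h₂ : Module.finrank ℝ ↥W₂ = 2) (w₁ : ↥W₁) (w₂ : ↥W₂),
      (w₁ : V) = (w₂ : V) → Q W₁ h₁ w₁ = Q W₂ h₂ w₂ := by
    intro W₁ W₂ h₁ h₂ w₁ w₂ hw
    by_cases h0 : (w₁ : V) = 0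
    · have e1 : w₁ = 0 := Subtype.ext h0
      have e2 : w₂ = 0 := Subtype.ext (by rw [← hw, h0]; simp)
      rw [e1, e2]
      norm_num
    · have hw₁ : w₁ ≠ 0 := fun h => h0 (by rw [h]; simp)
      have hw₂ : w₂ ≠ 0 := fun h => h0 (by rw [hw, h]; simp)
      have hc : 0 < Q W₁ h₁ w₁ := hpos _ _ _ hw₁
      set t : ℝ := (Real.sqrt (Q W₁ h₁ w₁))⁻¹ with htdef
      have hsq : Real.sqrt (Q W₁ h₁ w₁) ^ 2 = Q W₁ h₁ w₁ := Real.sq_sqrt hc.le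
      have hts : Real.sqrt (Q W₁ h₁ w₁) ≠ 0 := by positivity
      have ht0 : t ≠ 0 := inv_ne_zero hts
      have ht : t * t * Q W₁ h₁ w₁ = 1 := by
        rw [htdef, ← Real.mul_self_sqrt hc.le]
        field_simp
        rw [Real.sqrt_sq (Real.sqrt_nonneg _)]
      have h1 : Q W₁ h₁ (t • w₁) = 1 := by
        rw [QuadraticMap.map_smul, smul_eq_mul, ht]
      have hmem : t • (w₁ : V) ∈ U := by
        have := (hU W₁ h₁ (t • w₁)).2 h1
        simpa using this
      have h2 : Q W₂ h₂ (t • w₂) = 1 := by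
        refine (hU W₂ h₂ (t • w₂)).1 ?_
        have : ((t • w₂ : ↥W₂) : V) = t • (w₁ : V) := by rw [hw]; rfl
        rw [this]; exact hmem
      rw [QuadraticMap.map_smul, smul_eq_mul] at h2
      have := ht.trans h2.symm
      exact mul_left_cancel₀ (mul_ne_zero ht0 ht0) this
  have f_eq : ∀ (W : Submodule ℝ V) (hW : Module.finrank ℝ ↥W = 2) (w : ↥W),
      f (w : V) = Q W hW w := fun W hW w => key _ _ _ _ _ _ rfl
  -- basic properties of f
  have f_smul : ∀ (a : ℝ) (v : V), f (a • v) = a * a * f v := by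
    intro a v
    have h1 : f (a • v) = Q (P v v) (hP2 v v) (a • ⟨v, hPx v v⟩) := by
      have : ((a • (⟨v, hPx v v⟩ : ↥(P v v)) : ↥(P v v)) : V) = a • v := rfl
      rw [← this, f_eq]
    have e := f_eq (P v v) (hP2 v v) ⟨v, hPx v v⟩
    rw [h1, QuadraticMap.map_smul, smul_eq_mul, ← e]
  -- the expansion identity on each plane
  have E : ∀ (x y : V) (t : ℝ), f (x + t • y)
      = f x + t * (f (x + y) - f x - f y) + t * t * f y := by
    intro x y t
    set W := P x y
    set xw : ↥W := ⟨x, hPx x y⟩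
    set yw : ↥W := ⟨y, hPy x y⟩
    set QW := Q W (hP2 x y) with hQW
    have e1 : f (x + t • y) = QW (xw + t • yw) := by
      have : ((xw + t • yw : ↥W) : V) = x + t • y := rfl
      rw [← this, f_eq]
    have e2 : f (x + y) = QW (xw + yw) := by
      have : ((xw + yw : ↥W) : V) = x + y := rfl
      rw [← this, f_eq]
    have e3 : f x = QW xw := by
      have h : ((xw : ↥W) : V) = x := rfl
      rw [← h]; exact f_eq _ _ _
    have e4 : f y = QW yw := by
      have h : ((yw : ↥W) : V) = y := rfl
      rw [← h]; exact f_eq _ _ _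
    have hp : QW (xw + t • yw) = QW xw + QW (t • yw)
        + QuadraticMap.polar QW xw (t • yw) := by
      simp [QuadraticMap.polar]
      try ring
    rw [e1, e2, e3, e4, hp, QuadraticMap.polar_smul_right, QuadraticMap.map_smul,
      QuadraticMap.polar]
    simp [smul_eq_mul]
    ring
  set B₀ : V → V → ℝ := fun x y => f (x + y) - f x - f y with hB₀
  have Bsymm : ∀ x y, B₀ x y = B₀ y x := by
    intro x y
    have h : x + y = y + x := add_comm x y
    simp only [hB₀, h]
    try ring
  have E' : ∀ (x y : V) (t : ℝ), f (x + t • y) = f x + t * B₀ x y + t * t * f y := E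
  have H : ∀ (a : ℝ) (x y : V), B₀ (a • x) y = a * B₀ x y := by
    intro a x y
    have h1 : B₀ (a • x) y = f (y + a • x) - f (a • x) - f y := by
      simp [hB₀, add_comm]
    rw [h1, E' y x a, f_smul]
    rw [Bsymm]
    ring
  -- Claim 1 : valid for all s
  have C1 : ∀ (u v w : V) (s : ℝ),
      B₀ (s • u + w) v = s * (B₀ (w + v) u - B₀ w u) + B₀ w v := by
    intro u v w s
    have ha : s • u + w + v = (w + v) + s • u := by abel
    have hb : s • u + w = w + s • u := by abel
    simp only [hB₀]
    rw [ha, hb, E' (w + v) u s, E' w u s]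
    simp only [hB₀] at *
    ring
  -- Claim 2 : valid for s ≠ 0, by homogeneity
  have C2 : ∀ (u v w : V) (s : ℝ), s ≠ 0 →
      B₀ (s • u + w) v = s * B₀ u v + (B₀ (u + v) w - B₀ u w) := by
    intro u v w s hs
    have hsplit : s • u + w = s • (u + s⁻¹ • w) := by
      rw [smul_add, smul_smul, mul_inv_cancel₀ hs, one_smul]
    rw [hsplit, H]
    have : B₀ (u + s⁻¹ • w) v = B₀ (s⁻¹ • w + u) v := by rw [add_comm]
    rw [this, C1 w v u s⁻¹]
    field_simp
    ring
  have Badd : ∀ u v w : V, B₀ (u + v) w = B₀ u w + B₀ v w := by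
    intro u v w
    have e1 := (C1 u v w 1).symm.trans (C2 u v w 1 one_ne_zero)
    have e2 := (C1 u v w 2).symm.trans (C2 u v w 2 two_ne_zero)
    have hsym := Bsymm w v
    have hsym2 := Bsymm u w
    linarith
  -- assemble the bilinear companion
  set B : LinearMap.BilinMap ℝ V ℝ := LinearMap.mk₂ ℝ B₀ Badd (fun a x y => by rw [H, smul_eq_mul])
    (fun x y z => by rw [Bsymm, Badd, Bsymm y x, Bsymm z x])
    (fun a x y => by rw [Bsymm, H, Bsymm, smul_eq_mul]) with hB
  refine ⟨{ toFun := f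
            toFun_smul := fun a x => by rw [f_smul, smul_eq_mul]
            exists_companion' := ⟨B, fun x y => by
              simp only [hB, LinearMap.mk₂_apply, hB₀]; ring⟩ }, ?_, ?_⟩
  · intro v hv
    have : f v = Q (P v v) (hP2 v v) ⟨v, hPx v v⟩ := rfl
    show 0 < f v
    rw [this]
    exact hpos _ _ _ (fun h => hv (by simpa using congrArg Subtype.val h))
  · intro v
    show v ∈ U ↔ f v = 1
    have : f v = Q (P v v) (hP2 v v) ⟨v, hPx v v⟩ := rfl
    rw [this]
    exact hU (P v v) (hP2 v v) ⟨v, hPx v v⟩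
end
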